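/- arXiv:2205.15292 — 4 statements merged into one kernel-verified Lean document; each statement's English description precedes it below -/
import Mathlib

section
/- Let S = (R_i)_{i∈I} be a family of fuzzy relations on U and (X_j)_{j∈J} any family of fuzzy relations on U. Then for each k ∈ {1,2,3}, ⨅_{j∈J} SD_k(S)(X_j) ≤ SD_k(S)(⨆_{j∈J} X_j), where ⨆_{j∈J} X_j is the pointwise supremum. -/
/-- A complete residuated lattice: a complete lattice with a commutative monoid
operation `otimes` whose unit is the top element, distributing over arbitrary
suprema, together with its residuum `res` characterized by the adjunction. -/
class CRL (L : Type*) extends CompleteLattice L where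
  /-- the multiplication ⊗ -/
  otimes : L → L → L
  otimes_comm : ∀ a b : L, otimes a b = otimes b a
  otimes_assoc : ∀ a b c : L, otimes (otimes a b) c = otimes a (otimes b c)
  otimes_top : ∀ a : L, otimes a ⊤ = a
  otimes_sSup : ∀ (a : L) (s : Set L), otimes a (sSup s) = ⨆ b ∈ s, otimes a b
  /-- the residuum → -/
  res : L → L → L
  otimes_le_iff : ∀ a b c : L, otimes a b ≤ c ↔ a ≤ res b c

variable {L : Type*} [CRL L] {U : Type*}

/-- The biresiduum x ↔ y = (x → y) ⊓ (y → x). -/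
def bres (a b : L) : L := CRL.res a b ⊓ CRL.res b a

/-- Composition of fuzzy relations: (R ∘ P)(u,v) = ⨆ w, R(u,w) ⊗ P(w,v). -/
def fcomp (R P : U → U → L) : U → U → L :=
  fun u v => ⨆ w, CRL.otimes (R u w) (P w v)

/-- Inclusion degree of fuzzy relations: R ≲ Q. -/
def incl (R Q : U → U → L) : L := ⨅ u, ⨅ v, CRL.res (R u v) (Q u v)

/-- Equality degree of fuzzy relations: R ≈ Q. -/
def eqd (R Q : U → U → L) : L := ⨅ u, ⨅ v, bres (R u v) (Q u v)

/-- SD_1(S)(X) = ⨅ i, ((X ∘ R_i) ≲ (R_i ∘ X)). -/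
def SD1 {I : Type*} (S : I → U → U → L) (X : U → U → L) : L :=
  ⨅ i, incl (fcomp X (S i)) (fcomp (S i) X)

/-- SD_2(S)(X) = ⨅ i, ((R_i ∘ X) ≲ (X ∘ R_i)). -/
def SD2 {I : Type*} (S : I → U → U → L) (X : U → U → L) : L :=
  ⨅ i, incl (fcomp (S i) X) (fcomp X (S i))

/-- SD_3(S)(X) = SD_1(S)(X) ⊓ SD_2(S)(X). -/
def SD3 {I : Type*} (S : I → U → U → L) (X : U → U → L) : L :=
  SD1 S X ⊓ SD2 S X

lemma otimes_iSup {ι : Sort*} (c : L) (a : ι → L) :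
    CRL.otimes c (⨆ i, a i) = ⨆ i, CRL.otimes c (a i) := by
  rw [iSup, CRL.otimes_sSup, iSup_range]

lemma otimes_iSup_left {ι : Sort*} (c : L) (a : ι → L) :
    CRL.otimes (⨆ i, a i) c = ⨆ i, CRL.otimes (a i) c := by
  rw [CRL.otimes_comm, otimes_iSup]
  exact iSup_congr fun i => CRL.otimes_comm _ _

lemma otimes_mono_right (c : L) {a b : L} (h : a ≤ b) :
    CRL.otimes c a ≤ CRL.otimes c b := by
  have : b = ⨆ x : ({a, b} : Set L), (x : L) := by
    rw [← sSup_eq_iSup', sSup_pair, sup_eq_right.mpr h]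
  rw [this, otimes_iSup]
  exact le_iSup (fun x : ({a, b} : Set L) => CRL.otimes c (x : L))
    ⟨a, Set.mem_insert _ _⟩

lemma res_mono_right {b c : L} (a : L) (h : b ≤ c) : CRL.res a b ≤ CRL.res a c := by
  rw [← CRL.otimes_le_iff]
  exact le_trans ((CRL.otimes_le_iff _ _ _).mpr le_rfl) h

lemma res_anti_left {a b : L} (c : L) (h : a ≤ b) : CRL.res b c ≤ CRL.res a c := by
  rw [← CRL.otimes_le_iff]
  calc CRL.otimes (CRL.res b c) a ≤ CRL.otimes (CRL.res b c) b := otimes_mono_right _ h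
    _ ≤ c := (CRL.otimes_le_iff _ _ _).mpr le_rfl

lemma res_iSup {ι : Sort*} (a : ι → L) (c : L) :
    CRL.res (⨆ i, a i) c = ⨅ i, CRL.res (a i) c := by
  apply le_antisymm
  · exact le_iInf fun i => res_anti_left c (le_iSup a i)
  · rw [← CRL.otimes_le_iff, otimes_iSup]
    refine iSup_le fun i => ?_
    rw [CRL.otimes_comm]
    exact le_trans (otimes_mono_right _ (iInf_le _ i)) <| by
      rw [CRL.otimes_comm]; exact (CRL.otimes_le_iff _ _ _).mpr le_rfl

lemma main_ineq {J : Type*} (A B : J → U → U → L) (C : U → U → L)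
    (h : ∀ j u v, B j u v ≤ C u v) :
    (⨅ j, incl (A j) (B j)) ≤ incl (fun u v => ⨆ j, A j u v) C := by
  unfold incl
  refine le_iInf fun u => le_iInf fun v => ?_
  rw [res_iSup]
  refine le_iInf fun j => ?_
  calc (⨅ j, ⨅ u, ⨅ v, CRL.res (A j u v) (B j u v))
      ≤ CRL.res (A j u v) (B j u v) :=
        iInf_le_of_le j (le_trans (iInf_le _ u) (iInf_le _ v))
    _ ≤ CRL.res (A j u v) (C u v) := res_mono_right _ (h j u v)

lemma fcomp_iSup_left {J : Type*} (X : J → U → U → L) (R : U → U → L) :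
    fcomp (⨆ j, X j) R = fun u v => ⨆ j, fcomp (X j) R u v := by
  funext u v
  simp only [fcomp, iSup_apply]
  rw [iSup_comm]
  exact iSup_congr fun w => otimes_iSup_left _ _

lemma fcomp_iSup_right {J : Type*} (X : J → U → U → L) (R : U → U → L) :
    fcomp R (⨆ j, X j) = fun u v => ⨆ j, fcomp R (X j) u v := by
  funext u v
  simp only [fcomp, iSup_apply]
  rw [iSup_comm]
  exact iSup_congr fun w => otimes_iSup _ _

lemma fcomp_le_right {J : Type*} (X : J → U → U → L) (R : U → U → L) (j : J) :
    ∀ u v, fcomp R (X j) u v ≤ fcomp R (⨆ j, X j) u v := fun u v => by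
  rw [fcomp_iSup_right]
  exact le_iSup (fun j => fcomp R (X j) u v) j

lemma fcomp_le_left {J : Type*} (X : J → U → U → L) (R : U → U → L) (j : J) :
    ∀ u v, fcomp (X j) R u v ≤ fcomp (⨆ j, X j) R u v := fun u v => by
  rw [fcomp_iSup_left]
  exact le_iSup (fun j => fcomp (X j) R u v) j

lemma SD1_key {I J : Type*} (S : I → U → U → L) (X : J → U → U → L) :
    (⨅ j, SD1 S (X j)) ≤ SD1 S (⨆ j, X j) := by
  refine le_iInf fun i => ?_
  rw [fcomp_iSup_left]
  refine le_trans (le_iInf fun j => iInf_le_of_le j (iInf_le _ i)) ?_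
  exact main_ineq (fun j => fcomp (X j) (S i)) (fun j => fcomp (S i) (X j))
    (fcomp (S i) (⨆ j, X j)) (fun j => fcomp_le_right X (S i) j)

lemma SD2_key {I J : Type*} (S : I → U → U → L) (X : J → U → U → L) :
    (⨅ j, SD2 S (X j)) ≤ SD2 S (⨆ j, X j) := by
  refine le_iInf fun i => ?_
  rw [fcomp_iSup_right]
  refine le_trans (le_iInf fun j => iInf_le_of_le j (iInf_le _ i)) ?_
  exact main_ineq (fun j => fcomp (S i) (X j)) (fun j => fcomp (X j) (S i))
    (fcomp (⨆ j, X j) (S i)) (fun j => fcomp_le_left X (S i) j)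

/-- For each k ∈ {1,2,3}, ⨅ j, SD_k(S)(X_j) ≤ SD_k(S)(⨆ j, X_j). -/
theorem stmt2 [Nonempty U] {I J : Type*} (S : I → U → U → L) (X : J → U → U → L) :
    ((⨅ j, SD1 S (X j)) ≤ SD1 S (⨆ j, X j)) ∧
    ((⨅ j, SD2 S (X j)) ≤ SD2 S (⨆ j, X j)) ∧
    ((⨅ j, SD3 S (X j)) ≤ SD3 S (⨆ j, X j)) := by
  refine ⟨SD1_key S X, SD2_key S X, ?_⟩
  unfold SD3
  refine le_inf ?_ ?_
  · exact le_trans (le_iInf fun j => le_trans (iInf_le _ j) inf_le_left) (SD1_key S X)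
  · exact le_trans (le_iInf fun j => le_trans (iInf_le _ j) inf_le_right) (SD2_key S X)
end

section
/- Let S = (R_i)_{i∈I} be a family of fuzzy relations on U and X_0 a fuzzy relation on U. For every x ∈ L and each k ∈ {1,2,3}, the set {X | X ≤ X_0 and x ≤ SD_k(S)(X)}, ordered pointwise, is a nonempty complete lattice; in particular it has a greatest element, namely the pointwise supremum of all its members. -/
variable {L : Type*} [CRL L] {U : Type*}

/-- The set `sol`, ordered pointwise, is a nonempty complete lattice whose greatest
element is the pointwise supremum of all its members. -/
def IsNonemptyCompleteLatticeWithGreatestSup (sol : Set (U → U → L)) : Prop :=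
  sol.Nonempty ∧
  (∃ inst : CompleteLattice {X : U → U → L // X ∈ sol},
      ∀ a b : {X : U → U → L // X ∈ sol}, inst.le a b ↔ a.1 ≤ b.1) ∧
  sSup sol ∈ sol ∧ (∀ X ∈ sol, X ≤ sSup sol)

lemma ot_mono_left {a b : L} (c : L) (h : a ≤ b) :
    CRL.otimes a c ≤ CRL.otimes b c :=
  (CRL.otimes_le_iff a c _).mpr (h.trans ((CRL.otimes_le_iff b c _).mp le_rfl))

lemma ot_mono_right {a b : L} (c : L) (h : a ≤ b) :
    CRL.otimes c a ≤ CRL.otimes c b := by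
  rw [CRL.otimes_comm c a, CRL.otimes_comm c b]; exact ot_mono_left c h

lemma ot_iSup {ι : Sort*} (a : L) (f : ι → L) :
    CRL.otimes a (⨆ i, f i) = ⨆ i, CRL.otimes a (f i) := by
  rw [iSup, CRL.otimes_sSup a (Set.range f), iSup_range]

lemma ot_iSup_left {ι : Sort*} (a : L) (f : ι → L) :
    CRL.otimes (⨆ i, f i) a = ⨆ i, CRL.otimes (f i) a := by
  rw [CRL.otimes_comm, ot_iSup]
  exact iSup_congr fun i => CRL.otimes_comm a (f i)

lemma le_incl_iff (x : L) (R Q : U → U → L) :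
    x ≤ incl R Q ↔ ∀ u v, CRL.otimes x (R u v) ≤ Q u v := by
  simp only [incl, le_iInf_iff, ← CRL.otimes_le_iff]

lemma fcomp_mono_left {X Y : U → U → L} (h : X ≤ Y) (R : U → U → L) :
    fcomp X R ≤ fcomp Y R := fun u v =>
  iSup_mono fun w => ot_mono_left _ (h u w)

lemma fcomp_mono_right {X Y : U → U → L} (h : X ≤ Y) (R : U → U → L) :
    fcomp R X ≤ fcomp R Y := fun u v =>
  iSup_mono fun w => ot_mono_right _ (h w v)

lemma sSup_apply2 (T : Set (U → U → L)) (u v : U) :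
    sSup T u v = ⨆ X : T, X.1 u v := by
  rw [sSup_apply, iSup_apply]

lemma closed1 {I : Type*} (S : I → U → U → L) (x : L) (T : Set (U → U → L))
    (h : ∀ X ∈ T, x ≤ SD1 S X) : x ≤ SD1 S (sSup T) := by
  rw [SD1, le_iInf_iff]
  intro i
  rw [le_incl_iff]
  intro u v
  rw [fcomp, ot_iSup]
  apply iSup_le; intro w
  rw [sSup_apply2, ot_iSup_left, ot_iSup]
  apply iSup_le; intro X
  have h1 : x ≤ SD1 S X.1 := h X.1 X.2
  rw [SD1, le_iInf_iff] at h1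
  have h2 := (le_incl_iff x _ _).mp (h1 i) u v
  calc CRL.otimes x (CRL.otimes (X.1 u w) (S i w v))
      ≤ CRL.otimes x (fcomp X.1 (S i) u v) :=
        ot_mono_right x (le_iSup (fun w' => CRL.otimes (X.1 u w') (S i w' v)) w)
    _ ≤ fcomp (S i) X.1 u v := h2
    _ ≤ fcomp (S i) (sSup T) u v := fcomp_mono_right (le_sSup X.2) (S i) u v

lemma closed2 {I : Type*} (S : I → U → U → L) (x : L) (T : Set (U → U → L))
    (h : ∀ X ∈ T, x ≤ SD2 S X) : x ≤ SD2 S (sSup T) := by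
  rw [SD2, le_iInf_iff]
  intro i
  rw [le_incl_iff]
  intro u v
  rw [fcomp, ot_iSup]
  apply iSup_le; intro w
  rw [sSup_apply2, ot_iSup, ot_iSup]
  apply iSup_le; intro X
  have h1 : x ≤ SD2 S X.1 := h X.1 X.2
  rw [SD2, le_iInf_iff] at h1
  have h2 := (le_incl_iff x _ _).mp (h1 i) u v
  calc CRL.otimes x (CRL.otimes (S i u w) (X.1 w v))
      ≤ CRL.otimes x (fcomp (S i) X.1 u v) :=
        ot_mono_right x (le_iSup (fun w' => CRL.otimes (S i u w') (X.1 w' v)) w)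
    _ ≤ fcomp X.1 (S i) u v := h2
    _ ≤ fcomp (sSup T) (S i) u v := fcomp_mono_left (le_sSup X.2) (S i) u v

lemma closed3 {I : Type*} (S : I → U → U → L) (x : L) (T : Set (U → U → L))
    (h : ∀ X ∈ T, x ≤ SD3 S X) : x ≤ SD3 S (sSup T) :=
  le_inf (closed1 S x T fun X hX => (h X hX).trans inf_le_left)
    (closed2 S x T fun X hX => (h X hX).trans inf_le_right)

lemma master (sol : Set (U → U → L))
    (hclosed : ∀ T : Set (U → U → L), T ⊆ sol → sSup T ∈ sol) :
    IsNonemptyCompleteLatticeWithGreatestSup sol := by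
  have hmem : sSup sol ∈ sol := hclosed sol le_rfl
  refine ⟨⟨sSup sol, hmem⟩, ?_, hmem, fun X hX => le_sSup hX⟩
  letI : SupSet {X : U → U → L // X ∈ sol} :=
    ⟨fun s => ⟨sSup (Subtype.val '' s), hclosed _ (by rintro _ ⟨X, _, rfl⟩; exact X.2)⟩⟩
  refine ⟨completeLatticeOfSup _ ?_, fun a b => Iff.rfl⟩
  intro s
  constructor
  · intro a ha
    show a.1 ≤ sSup (Subtype.val '' s)
    exact le_sSup (Set.mem_image_of_mem _ ha)
  · intro b hb
    show sSup (Subtype.val '' s) ≤ b.1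
    apply sSup_le
    rintro _ ⟨X, hX, rfl⟩
    exact hb hX

/-- For every x ∈ L and each k ∈ {1,2,3}, the set {X | X ≤ X₀ ∧ x ≤ SD_k(S)(X)},
ordered pointwise, is a nonempty complete lattice; in particular it has a greatest
element, namely the pointwise supremum of all its members. -/
theorem stmt4 [Nonempty U] {I : Type*} (S : I → U → U → L) (X0 : U → U → L) (x : L) :
    IsNonemptyCompleteLatticeWithGreatestSup {X : U → U → L | X ≤ X0 ∧ x ≤ SD1 S X} ∧
    IsNonemptyCompleteLatticeWithGreatestSup {X : U → U → L | X ≤ X0 ∧ x ≤ SD2 S X} ∧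
    IsNonemptyCompleteLatticeWithGreatestSup {X : U → U → L | X ≤ X0 ∧ x ≤ SD3 S X} := by
  refine ⟨master _ fun T hT => ?_, master _ fun T hT => ?_, master _ fun T hT => ?_⟩
  · exact ⟨sSup_le fun X hX => (hT hX).1, closed1 S x T fun X hX => (hT hX).2⟩
  · exact ⟨sSup_le fun X hX => (hT hX).1, closed2 S x T fun X hX => (hT hX).2⟩
  · exact ⟨sSup_le fun X hX => (hT hX).1, closed3 S x T fun X hX => (hT hX).2⟩
end

section
/- Let S = (R_i)_{i∈I} be a family of fuzzy relations on U and X_0 a fuzzy preorder on U. For k ∈ {1,2,3}, define the sequence X^k_0 = X_0 and X^k_{n+1} = X^k_n ⊓ F_k(X^k_n). Then for every n: (a) X^k_{n+1} ≤ X^k_n, and (b) X^k_n is a fuzzy preorder on U. -/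
variable {L : Type*} [CRL L] {U : Type*}

/-- The left residual Q / R : (Q / R)(u,v) = ⨅ w, R(v,w) → Q(u,w). -/
def lres (Q R : U → U → L) : U → U → L := fun u v => ⨅ w, CRL.res (R v w) (Q u w)

/-- The right residual R \\ Q : (R \\ Q)(u,v) = ⨅ w, R(w,u) → Q(w,v). -/
def rres (R Q : U → U → L) : U → U → L := fun u v => ⨅ w, CRL.res (R w u) (Q w v)

/-- A fuzzy preorder: reflexive (P(u,u) = 1 = ⊤) and transitive (P ∘ P ≤ P). -/
def IsFuzzyPreorder (P : U → U → L) : Prop :=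
  (∀ u, P u u = ⊤) ∧ fcomp P P ≤ P

/-- F_1(X) = ⨅ i, (R_i ∘ X) / (R_i ∘ X). -/
def F1 {I : Type*} (S : I → U → U → L) (X : U → U → L) : U → U → L :=
  ⨅ i, lres (fcomp (S i) X) (fcomp (S i) X)

/-- F_2(X) = ⨅ i, (X ∘ R_i) \\ (X ∘ R_i). -/
def F2 {I : Type*} (S : I → U → U → L) (X : U → U → L) : U → U → L :=
  ⨅ i, rres (fcomp X (S i)) (fcomp X (S i))

/-- F_3(X) = F_1(X) ⊓ F_2(X). -/
def F3 {I : Type*} (S : I → U → U → L) (X : U → U → L) : U → U → L :=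
  F1 S X ⊓ F2 S X

section Aux

lemma top_le_res_self (a : L) : (⊤ : L) ≤ CRL.res a a :=
  (CRL.otimes_le_iff ⊤ a a).1 (by rw [CRL.otimes_comm, CRL.otimes_top])

lemma otimes_le_of_le_res {a b c : L} (h : a ≤ CRL.res b c) : CRL.otimes a b ≤ c :=
  (CRL.otimes_le_iff a b c).2 h

lemma otimes_mono {a b c d : L} (hab : a ≤ b) (hcd : c ≤ d) :
    CRL.otimes a c ≤ CRL.otimes b d := by
  have h1 : CRL.otimes a c ≤ CRL.otimes b c :=
    (CRL.otimes_le_iff a c (CRL.otimes b c)).2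
      (hab.trans ((CRL.otimes_le_iff b c (CRL.otimes b c)).1 le_rfl))
  have h2 : CRL.otimes b c ≤ CRL.otimes b d := by
    rw [CRL.otimes_comm b c, CRL.otimes_comm b d]
    exact (CRL.otimes_le_iff c b (CRL.otimes d b)).2
      (hcd.trans ((CRL.otimes_le_iff d b (CRL.otimes d b)).1 le_rfl))
  exact h1.trans h2

lemma fcomp_mono {R R' P P' : U → U → L} (hR : R ≤ R') (hP : P ≤ P') :
    fcomp R P ≤ fcomp R' P' := fun u v =>
  iSup_mono fun w => otimes_mono (hR u w) (hP w v)

lemma lres_self_preorder (Q : U → U → L) : IsFuzzyPreorder (lres Q Q) := by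
  constructor
  · intro u
    exact le_antisymm le_top (le_iInf fun w => top_le_res_self _)
  · intro u v
    refine iSup_le fun x => le_iInf fun w => ?_
    rw [← CRL.otimes_le_iff, CRL.otimes_assoc]
    have h1 : CRL.otimes (lres Q Q x v) (Q v w) ≤ Q x w :=
      otimes_le_of_le_res (iInf_le _ w)
    have h2 : CRL.otimes (lres Q Q u x) (Q x w) ≤ Q u w :=
      otimes_le_of_le_res (iInf_le _ w)
    exact (otimes_mono le_rfl h1).trans h2

lemma rres_self_preorder (Q : U → U → L) : IsFuzzyPreorder (rres Q Q) := by
  constructor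
  · intro u
    exact le_antisymm le_top (le_iInf fun w => top_le_res_self _)
  · intro u v
    refine iSup_le fun x => le_iInf fun w => ?_
    rw [← CRL.otimes_le_iff]
    have h1 : CRL.otimes (rres Q Q u x) (Q w u) ≤ Q w x :=
      otimes_le_of_le_res (iInf_le _ w)
    have h2 : CRL.otimes (rres Q Q x v) (Q w x) ≤ Q w v :=
      otimes_le_of_le_res (iInf_le _ w)
    calc CRL.otimes (CRL.otimes (rres Q Q u x) (rres Q Q x v)) (Q w u)
        = CRL.otimes (rres Q Q x v) (CRL.otimes (rres Q Q u x) (Q w u)) := by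
          rw [CRL.otimes_comm (rres Q Q u x) (rres Q Q x v), CRL.otimes_assoc]
      _ ≤ CRL.otimes (rres Q Q x v) (Q w x) := otimes_mono le_rfl h1
      _ ≤ Q w v := h2

lemma preorder_iInf {ι : Type*} (P : ι → U → U → L)
    (h : ∀ i, IsFuzzyPreorder (P i)) : IsFuzzyPreorder (⨅ i, P i) := by
  constructor
  · intro u
    simp only [iInf_apply]
    exact le_antisymm le_top (le_iInf fun i => ((h i).1 u).ge)
  · refine le_iInf fun i => ?_
    exact (fcomp_mono (iInf_le P i) (iInf_le P i)).trans (h i).2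

lemma preorder_inf {P Q : U → U → L} (hP : IsFuzzyPreorder P)
    (hQ : IsFuzzyPreorder Q) : IsFuzzyPreorder (P ⊓ Q) := by
  constructor
  · intro u
    simp only [Pi.inf_apply, hP.1 u, hQ.1 u, inf_top_eq]
  · exact le_inf ((fcomp_mono inf_le_left inf_le_left).trans hP.2)
      ((fcomp_mono inf_le_right inf_le_right).trans hQ.2)

lemma F1_preorder {I : Type*} (S : I → U → U → L) (X : U → U → L) :
    IsFuzzyPreorder (F1 S X) :=
  preorder_iInf _ fun i => lres_self_preorder _

lemma F2_preorder {I : Type*} (S : I → U → U → L) (X : U → U → L) :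
    IsFuzzyPreorder (F2 S X) :=
  preorder_iInf _ fun i => rres_self_preorder _

lemma F3_preorder {I : Type*} (S : I → U → U → L) (X : U → U → L) :
    IsFuzzyPreorder (F3 S X) :=
  preorder_inf (F1_preorder S X) (F2_preorder S X)

lemma seq_preorder {X0 : U → U → L}
    (hX0 : IsFuzzyPreorder X0) (X : ℕ → U → U → L) (F : (U → U → L) → U → U → L)
    (hF : ∀ Y, IsFuzzyPreorder (F Y))
    (h0 : X 0 = X0) (hs : ∀ n, X (n + 1) = X n ⊓ F (X n)) :
    ∀ n, X (n + 1) ≤ X n ∧ IsFuzzyPreorder (X n) := by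
  have key : ∀ n, IsFuzzyPreorder (X n) := by
    intro n
    induction n with
    | zero => rw [h0]; exact hX0
    | succ m ih => rw [hs m]; exact preorder_inf ih (hF _)
  intro n
  exact ⟨(hs n) ▸ inf_le_left, key n⟩

end Aux

/-- For each k ∈ {1,2,3}, the sequence X^k_0 = X₀, X^k_{n+1} = X^k_n ⊓ F_k(X^k_n)
is non-increasing and consists of fuzzy preorders. -/
theorem stmt17 [Nonempty U] {I : Type*} (S : I → U → U → L) (X0 : U → U → L)
    (hX0 : IsFuzzyPreorder X0) (X1 X2 X3 : ℕ → U → U → L)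
    (h10 : X1 0 = X0) (h1 : ∀ n, X1 (n + 1) = X1 n ⊓ F1 S (X1 n))
    (h20 : X2 0 = X0) (h2 : ∀ n, X2 (n + 1) = X2 n ⊓ F2 S (X2 n))
    (h30 : X3 0 = X0) (h3 : ∀ n, X3 (n + 1) = X3 n ⊓ F3 S (X3 n)) :
    (∀ n, X1 (n + 1) ≤ X1 n ∧ IsFuzzyPreorder (X1 n)) ∧
    (∀ n, X2 (n + 1) ≤ X2 n ∧ IsFuzzyPreorder (X2 n)) ∧
    (∀ n, X3 (n + 1) ≤ X3 n ∧ IsFuzzyPreorder (X3 n)) := by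
  exact ⟨seq_preorder hX0 X1 (F1 S) (F1_preorder S) h10 h1,
    seq_preorder hX0 X2 (F2 S) (F2_preorder S) h20 h2,
    seq_preorder hX0 X3 (F3 S) (F3_preorder S) h30 h3⟩
end

section
/- Over the Goguen structure, let U = {1, 2, 3}, let R be the fuzzy relation on U with matrix rows (0, 0.4, 1), (0.6, 0.6, 0.8), (0.8, 1, 1) (so R(1,1) = 0, R(1,2) = 0.4, etc.), and let X_0 be the fuzzy relation on U with matrix rows (1, 0.2, 0.06), (0.4, 1, 0.3), (0.24, 0.6, 1). Then X_0 is a fuzzy preorder, and the set of fuzzy preorders X on U satisfying X ≤ X_0 and 2/3 ≤ ((X ∘ R) ≈ (R ∘ X)) has no greatest element. In particular, it is not true that for every threshold x and every fuzzy preorder X_0 there exists a greatest fuzzy preorder X with X ≤ X_0 whose solution degree (X ∘ R) ≈ (R ∘ X) is at least x. -/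
/-! The Goguen (product) structure on the real unit interval [0,1]:
⊗ is ordinary multiplication, the residuum is x → y = 1 if x ≤ y and y/x otherwise,
and the biresiduum is the minimum of the two residua. Fuzzy relations on U = Fin 3
are maps U → U → ℝ with values in [0,1], ordered pointwise. -/

/-- Goguen residuum. -/
noncomputable def gImp (x y : ℝ) : ℝ := if x ≤ y then 1 else y / x

/-- Goguen biresiduum. -/
noncomputable def gBimp (x y : ℝ) : ℝ := gImp x y ⊓ gImp y x

/-- Composition of fuzzy relations over the Goguen structure:
(R ∘ P)(u,v) = ⨆ w, R(u,w) · P(w,v). -/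
noncomputable def gComp (R P : Fin 3 → Fin 3 → ℝ) : Fin 3 → Fin 3 → ℝ :=
  fun u v => ⨆ w, R u w * P w v

/-- Equality degree of fuzzy relations: the infimum of the pointwise biresidua. -/
noncomputable def gEqd (R Q : Fin 3 → Fin 3 → ℝ) : ℝ := ⨅ u, ⨅ v, gBimp (R u v) (Q u v)

/-- All values lie in the unit interval [0,1]. -/
def In01 (R : Fin 3 → Fin 3 → ℝ) : Prop := ∀ u v, R u v ∈ Set.Icc (0 : ℝ) 1

/-- A fuzzy preorder: reflexive (P(u,u) = 1) and transitive (P ∘ P ≤ P). -/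
def IsGoguenPreorder (P : Fin 3 → Fin 3 → ℝ) : Prop :=
  (∀ u, P u u = 1) ∧ gComp P P ≤ P

/-- The set of fuzzy preorders X with X ≤ X₀ whose solution degree
(X ∘ R) ≈ (R ∘ X) is at least x. -/
noncomputable def solSet (R X0 : Fin 3 → Fin 3 → ℝ) (x : ℝ) : Set (Fin 3 → Fin 3 → ℝ) :=
  {X | In01 X ∧ IsGoguenPreorder X ∧ X ≤ X0 ∧ x ≤ gEqd (gComp X R) (gComp R X)}

/-- The fuzzy relation R of Proposition 1. -/
noncomputable def Rmat : Fin 3 → Fin 3 → ℝ :=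
  ![![0, 0.4, 1], ![0.6, 0.6, 0.8], ![0.8, 1, 1]]

/-- The fuzzy preorder X₀ of Proposition 1. -/
noncomputable def X0mat : Fin 3 → Fin 3 → ℝ :=
  ![![1, 0.2, 0.06], ![0.4, 1, 0.3], ![0.24, 0.6, 1]]

/-!
The two relations `Xa` and `Xb` below are solutions: fuzzy preorders below X₀ with solution
degree at least 2/3. A common upper bound G of both has G(3,2) ≥ 3/5 (from `Xa`) and
G(2,1) ≥ 2/5 (from `Xb`), so transitivity forces G(3,1) ≥ 6/25 and hence
(R ∘ G)(1,1) ≥ R(1,3) · G(3,1) ≥ 6/25. On the other hand G ≤ X₀ bounds the first row of G,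
which gives (G ∘ R)(1,1) ≤ 3/25. The solution degree of G is therefore at most 1/2 < 2/3.
Indices here are 1-based as in the paper; in the code `Fin 3` counts from 0.
-/

lemma ciSup_fin_three {α : Type*} [ConditionallyCompleteLinearOrder α] (f : Fin 3 → α) :
    ⨆ i, f i = max (f 0) (max (f 1) (f 2)) := by
  apply le_antisymm
  · exact ciSup_le fun i => by fin_cases i <;> simp
  · have hbdd : BddAbove (Set.range f) := (Set.finite_range f).bddAbove
    exact max_le (le_ciSup hbdd 0) (max_le (le_ciSup hbdd 1) (le_ciSup hbdd 2))

lemma gComp_apply (A B : Fin 3 → Fin 3 → ℝ) (u v : Fin 3) :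
    gComp A B u v = max (A u 0 * B 0 v) (max (A u 1 * B 1 v) (A u 2 * B 2 v)) :=
  ciSup_fin_three _

lemma mul_le_gComp (A B : Fin 3 → Fin 3 → ℝ) (u w v : Fin 3) :
    A u w * B w v ≤ gComp A B u v :=
  le_ciSup (f := fun w => A u w * B w v) (Set.finite_range _).bddAbove w

lemma IsGoguenPreorder.mul_le {P : Fin 3 → Fin 3 → ℝ} (hP : IsGoguenPreorder P)
    (u w v : Fin 3) : P u w * P w v ≤ P u v :=
  (mul_le_gComp P P u w v).trans (hP.2 u v)

lemma le_gEqd {A B : Fin 3 → Fin 3 → ℝ} {x : ℝ}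
    (h : ∀ u v, x ≤ gBimp (A u v) (B u v)) : x ≤ gEqd A B :=
  le_ciInf fun u => le_ciInf fun v => h u v

lemma gEqd_le_gBimp (A B : Fin 3 → Fin 3 → ℝ) (u v : Fin 3) :
    gEqd A B ≤ gBimp (A u v) (B u v) :=
  (ciInf_le (Set.finite_range _).bddBelow u).trans (ciInf_le (Set.finite_range _).bddBelow v)

lemma gBimp_le_div_of_lt {p q : ℝ} (h : p < q) : gBimp p q ≤ p / q := by
  refine inf_le_right.trans ?_
  rw [gImp, if_neg h.not_ge]

lemma in01_X0mat : In01 X0mat := by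
  intro u v
  fin_cases u <;> fin_cases v <;> norm_num [X0mat]

lemma isGoguenPreorder_X0mat : IsGoguenPreorder X0mat := by
  refine ⟨fun u => ?_, fun u v => ?_⟩
  · fin_cases u <;> norm_num [X0mat]
  · rw [gComp_apply]
    fin_cases u <;> fin_cases v <;> norm_num [X0mat, Matrix.cons_val_two]

noncomputable def Xa : Fin 3 → Fin 3 → ℝ :=
  ![![1, 1/5, 3/50], ![6/25, 1, 3/10], ![18/125, 3/5, 1]]

noncomputable def Xb : Fin 3 → Fin 3 → ℝ :=
  ![![1, 1/5, 3/50], ![2/5, 1, 3/10], ![4/25, 9/25, 1]]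

lemma Xa_mem_solSet : Xa ∈ solSet Rmat X0mat (2 / 3) := by
  refine ⟨fun u v => ?_, ⟨fun u => ?_, fun u v => ?_⟩, fun u v => ?_, le_gEqd fun u v => ?_⟩ <;>
    (try simp only [gComp_apply]) <;> fin_cases u <;> (try fin_cases v) <;>
    norm_num [Xa, X0mat, Rmat, gBimp, gImp, Matrix.cons_val_two]

lemma Xb_mem_solSet : Xb ∈ solSet Rmat X0mat (2 / 3) := by
  refine ⟨fun u v => ?_, ⟨fun u => ?_, fun u v => ?_⟩, fun u v => ?_, le_gEqd fun u v => ?_⟩ <;>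
    (try simp only [gComp_apply]) <;> fin_cases u <;> (try fin_cases v) <;>
    norm_num [Xb, X0mat, Rmat, gBimp, gImp, Matrix.cons_val_two]

lemma gEqd_le_half_of_Xa_le_of_Xb_le {G : Fin 3 → Fin 3 → ℝ} (hG01 : In01 G)
    (hG : IsGoguenPreorder G) (hGX0 : G ≤ X0mat) (ha : Xa ≤ G) (hb : Xb ≤ G) :
    gEqd (gComp G Rmat) (gComp Rmat G) ≤ 1 / 2 := by
  have h21 : (3 / 5 : ℝ) ≤ G 2 1 := by simpa [Xa] using ha 2 1
  have h10 : (2 / 5 : ℝ) ≤ G 1 0 := by simpa [Xb] using hb 1 0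
  have h20 : (6 / 25 : ℝ) ≤ G 2 0 :=
    calc (6 / 25 : ℝ) = 3 / 5 * (2 / 5) := by norm_num
      _ ≤ G 2 1 * G 1 0 := mul_le_mul h21 h10 (by norm_num) (hG01 2 1).1
      _ ≤ G 2 0 := hG.mul_le 2 1 0
  have hRG : (6 / 25 : ℝ) ≤ gComp Rmat G 0 0 :=
    calc (6 / 25 : ℝ) ≤ Rmat 0 2 * G 2 0 := by simpa [Rmat] using h20
      _ ≤ gComp Rmat G 0 0 := mul_le_gComp _ _ 0 2 0
  have hGR : gComp G Rmat 0 0 ≤ 3 / 25 := by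
    have h01 : G 0 1 ≤ 1 / 5 := (hGX0 0 1).trans_eq (by norm_num [X0mat])
    have h02 : G 0 2 ≤ 3 / 50 := (hGX0 0 2).trans_eq (by norm_num [X0mat, Matrix.cons_val_two])
    rw [gComp_apply]
    refine max_le ?_ (max_le ?_ ?_) <;> norm_num [Rmat, Matrix.cons_val_two] <;> linarith
  calc gEqd (gComp G Rmat) (gComp Rmat G)
      ≤ gBimp (gComp G Rmat 0 0) (gComp Rmat G 0 0) := gEqd_le_gBimp _ _ 0 0
    _ ≤ gComp G Rmat 0 0 / gComp Rmat G 0 0 := gBimp_le_div_of_lt (by linarith)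
    _ ≤ 1 / 2 := by rw [div_le_iff₀ (by linarith)]; linarith

/-- X₀ is a fuzzy preorder, the set of fuzzy preorders X ≤ X₀ with solution degree
at least 2/3 has no greatest element, and in particular it is not true that for every
threshold x ∈ [0,1] and every fuzzy preorder Y₀ there is a greatest fuzzy preorder
X ≤ Y₀ with solution degree at least x. -/
theorem stmt19 :
    (In01 X0mat ∧ IsGoguenPreorder X0mat) ∧
    (¬ ∃ G ∈ solSet Rmat X0mat (2 / 3),
        ∀ X ∈ solSet Rmat X0mat (2 / 3), X ≤ G) ∧
    (¬ ∀ x ∈ Set.Icc (0 : ℝ) 1, ∀ Y0 : Fin 3 → Fin 3 → ℝ,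
        In01 Y0 → IsGoguenPreorder Y0 →
        ∃ G ∈ solSet Rmat Y0 x, ∀ X ∈ solSet Rmat Y0 x, X ≤ G) := by
  have hX0 : In01 X0mat ∧ IsGoguenPreorder X0mat := ⟨in01_X0mat, isGoguenPreorder_X0mat⟩
  have hno : ¬ ∃ G ∈ solSet Rmat X0mat (2 / 3), ∀ X ∈ solSet Rmat X0mat (2 / 3), X ≤ G := by
    rintro ⟨G, ⟨hG01, hG, hGX0, hdeg⟩, hgreatest⟩
    have := gEqd_le_half_of_Xa_le_of_Xb_le hG01 hG hGX0
      (hgreatest Xa Xa_mem_solSet) (hgreatest Xb Xb_mem_solSet)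
    linarith
  exact ⟨hX0, hno, fun h => hno (h (2 / 3) (by norm_num) X0mat hX0.1 hX0.2)⟩
end
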